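/- Under the assumptions b - b_{N+1} = vλ, K = μSN/(rv), t^{N+1} = rvK/((N+1)b_{N+1}), and the storage constraint (1-μ)S/(vλ) > t^{N+1}, the bandwidth used for data migration satisfies b_{N+1}/b > μN/(N+1-μ). -/

import Mathlib

/-! Both sides of the storage constraint carry the factor `S`; cancelling it and clearing
denominators gives `μ N (b - b_{N+1}) < (1 - μ)(N + 1) b_{N+1}`, and since
`(N + 1 - μ) b_{N+1} - μ N b = (1 - μ)(N + 1) b_{N+1} - μ N (b - b_{N+1})` this is exactly
`μ N b < (N + 1 - μ) b_{N+1}`. -/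

lemma div_lt_div_of_mul_sub_lt {b c m n : ℝ} (hb : 0 < b) (hden : 0 < n + 1 - m)
    (h : m * n * (b - c) < (1 - m) * ((n + 1) * c)) :
    m * n / (n + 1 - m) < c / b := by
  rw [div_lt_div_iff₀ hden hb]
  linear_combination h

lemma mul_sub_lt_of_div_lt_div {b c m n S : ℝ} (hc : 0 < c) (hcb : c < b) (hS : 0 < S)
    (hn : 0 ≤ n) (h : m * S * n / ((n + 1) * c) < (1 - m) * S / (b - c)) :
    m * n * (b - c) < (1 - m) * ((n + 1) * c) := by
  rw [div_lt_div_iff₀ (by positivity) (sub_pos.2 hcb)] at h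
  exact lt_of_mul_lt_mul_left (by linear_combination h) hS.le

theorem migration_bandwidth_fraction_general (N : ℕ)
    (b v lam S μ K r bN1 tN1 : ℝ)
    (hb : 0 < b) (hv : 0 < v) (hS : 0 < S)
    (hμ1 : μ < 1) (hr : 0 < r) (hbN1 : 0 < bN1)
    (hbN1b : bN1 < b)
    (hband : b - bN1 = v * lam)
    (hKeq : K = μ * S * N / (r * v))
    (ht : tN1 = r * v * K / ((N + 1) * bN1))
    (hstorage : (1 - μ) * S / (v * lam) > tN1) :
    bN1 / b > μ * N / (N + 1 - μ) := by
  have hthreshold : tN1 = μ * S * N / ((N + 1) * bN1) := by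
    rw [ht, hKeq]
    field_simp
  rw [← hband, hthreshold] at hstorage
  have hden : (0 : ℝ) < N + 1 - μ := by linarith [N.cast_nonneg (α := ℝ)]
  exact div_lt_div_of_mul_sub_lt hb hden
    (mul_sub_lt_of_div_lt_div hbN1 hbN1b hS N.cast_nonneg hstorage)

theorem migration_bandwidth_fraction (N : ℕ) (hN : 1 ≤ N)
    (b v lam S μ K r bN1 tN1 : ℝ)
    (hb : 0 < b) (hv : 0 < v) (hlam : 0 < lam) (hS : 0 < S)
    (hμ0 : 0 < μ) (hμ1 : μ < 1) (hK : 0 < K) (hr : 0 < r) (hbN1 : 0 < bN1)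
    (hbN1b : bN1 < b)
    (hband : b - bN1 = v * lam)
    (hKeq : K = μ * S * N / (r * v))
    (ht : tN1 = r * v * K / ((N + 1) * bN1))
    (hstorage : (1 - μ) * S / (v * lam) > tN1) :
    bN1 / b > μ * N / (N + 1 - μ) :=
  migration_bandwidth_fraction_general N b v lam S μ K r bN1 tN1 hb hv hS hμ1 hr hbN1 hbN1b hband
    hKeq ht hstorage
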